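/- Let \(A\) be a symmetric \(3\times 3\) complex matrix and \(\xi\in\mathbb{R}^3\). Then \[-2|A\xi|^2|\xi|^2+\tfrac12|\xi^T A\xi|^2+\tfrac12\,\xi^T A\xi\cdot\overline{\operatorname{tr}A}\,|\xi|^2+\tfrac12\,\xi^T\bar A\xi\cdot\operatorname{tr}A\,|\xi|^2-\tfrac12|\operatorname{tr}A|^2|\xi|^4+|A|^2|\xi|^4\ \geq\ 0,\] where \(|A|^2=\sum_{i,j}|a_{ij}|^2\). -/

import Mathlib

open Finset

/-- The quadratic expression
`-2|Aξ|²|ξ|² + ½|ξᵀAξ|² + ½ ξᵀAξ · conj(tr A) |ξ|² + ½ ξᵀĀξ · tr A |ξ|²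
 - ½|tr A|²|ξ|⁴ + |A|²|ξ|⁴`. -/
noncomputable def secondVariationIntegrand (A : Matrix (Fin 3) (Fin 3) ℂ) (ξ : Fin 3 → ℝ) : ℂ :=
  let ξC : Fin 3 → ℂ := fun i => (ξ i : ℂ)
  let n2 : ℂ := ((∑ i, ξ i ^ 2 : ℝ) : ℂ)
  let Aξ2 : ℂ := ((∑ i, Complex.normSq (∑ j, A i j * ξC j) : ℝ) : ℂ)
  let q : ℂ := ∑ i, ∑ j, A i j * ξC i * ξC j
  let qbar : ℂ := ∑ i, ∑ j, (starRingEnd ℂ) (A i j) * ξC i * ξC j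
  let trA : ℂ := ∑ i, A i i
  let nA2 : ℂ := ((∑ i, ∑ j, Complex.normSq (A i j) : ℝ) : ℂ)
  (-2) * Aξ2 * n2 + (1 / 2) * ((Complex.normSq q : ℝ) : ℂ)
    + (1 / 2) * q * (starRingEnd ℂ) trA * n2 + (1 / 2) * qbar * trA * n2
    - (1 / 2) * ((Complex.normSq trA : ℝ) : ℂ) * n2 ^ 2 + nA2 * n2 ^ 2

/-!
Since `ξ` is real, the expression splits as `G(X) + G(Y)` for `A = X + iY`, where `G` is the
same quadratic form on real symmetric matrices. Let `P = |ξ|² I - ξξᵀ`, which is `|ξ|²` times the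
orthogonal projection onto `ξ⊥`, and `M = PXP`. Then `|ξ|⁴ G(X) = ‖M‖² - ½ (tr M)²` in the
Frobenius norm. From `P² = |ξ|² P` one gets `⟨P, M⟩ = |ξ|² tr M` and `‖P‖² = (d - 1)|ξ|⁴`, so
Cauchy–Schwarz gives `(tr M)² ≤ (d - 1)‖M‖²`, which is enough in dimension `d ≤ 3`.
-/

open Matrix

namespace Matrix

variable {ι : Type*} [Fintype ι]

lemma sq_trace_mul_transpose_le {m n : Type*} [Fintype m] [Fintype n] (A B : Matrix m n ℝ) :
    (A * Bᵀ).trace ^ 2 ≤ (A * Aᵀ).trace * (B * Bᵀ).trace := by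
  simp only [trace, diag, mul_apply, transpose_apply, ← sq, ← Fintype.sum_prod_type']
  exact sum_mul_sq_le_sq_mul_sq _ _ _

lemma trace_mul_transpose_self_nonneg {m n : Type*} [Fintype m] [Fintype n]
    (A : Matrix m n ℝ) : 0 ≤ (A * Aᵀ).trace := by
  simp only [trace, diag, mul_apply, transpose_apply]
  exact sum_nonneg fun i _ ↦ sum_nonneg fun j _ ↦ mul_self_nonneg (A i j)

section MulSelfEqSmul

variable {R : Type*} [CommRing R] {P : Matrix ι ι R} {c : R}

lemma trace_mul_mul_of_mul_self_eq_smul (hP : P * P = c • P) (X : Matrix ι ι R) :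
    (P * X * P).trace = c * (X * P).trace := by
  rw [trace_mul_comm, ← Matrix.mul_assoc, hP, smul_mul, trace_smul, smul_eq_mul, trace_mul_comm]

lemma trace_mul_transpose_of_mul_self_eq_smul (hP : P * P = c • P) (hPt : Pᵀ = P)
    {X : Matrix ι ι R} (hX : X.IsSymm) :
    (P * X * P * (P * X * P)ᵀ).trace = c ^ 2 * (X * P * (X * P)).trace := by
  rw [transpose_mul, transpose_mul, hPt, hX.eq,
    show P * X * P * (P * (X * P)) = P * (X * (P * P) * X * P) by simp only [Matrix.mul_assoc],
    trace_mul_comm, hP]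
  simp only [Matrix.mul_assoc, hP, Matrix.mul_smul, smul_mul, trace_smul, smul_eq_mul]
  ring

end MulSelfEqSmul

lemma mul_sq_trace_le_of_mul_self_eq_smul {P : Matrix ι ι ℝ} {c : ℝ} (hP : P * P = c • P)
    (hPt : Pᵀ = P) (hc : 0 < c) (X : Matrix ι ι ℝ) :
    c * (P * X * P).trace ^ 2 ≤ P.trace * (P * X * P * (P * X * P)ᵀ).trace := by
  have hinner : (P * (P * X * P)ᵀ).trace = c * (P * X * P).trace := by
    rw [transpose_mul, transpose_mul, hPt, ← Matrix.mul_assoc, ← Matrix.mul_assoc, hP, smul_mul,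
      smul_mul, trace_smul, smul_eq_mul, ← trace_transpose (P * Xᵀ * P)]
    simp only [transpose_mul, transpose_transpose, hPt, Matrix.mul_assoc]
  have hnorm : (P * Pᵀ).trace = c * P.trace := by
    rw [hPt, hP, trace_smul, smul_eq_mul]
  have hcs := sq_trace_mul_transpose_le P (P * X * P)
  rw [hinner, hnorm] at hcs
  nlinarith

end Matrix

variable {ι : Type*} [Fintype ι]

section ScaledProj

variable [DecidableEq ι]

def scaledProj (ξ : ι → ℝ) : Matrix ι ι ℝ := (ξ ⬝ᵥ ξ) • 1 - vecMulVec ξ ξ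

lemma mul_scaledProj (X : Matrix ι ι ℝ) (ξ : ι → ℝ) :
    X * scaledProj ξ = (ξ ⬝ᵥ ξ) • X - vecMulVec (X *ᵥ ξ) ξ := by
  simp [scaledProj, mul_sub, mul_vecMulVec]

lemma scaledProj_mul_self (ξ : ι → ℝ) :
    scaledProj ξ * scaledProj ξ = (ξ ⬝ᵥ ξ) • scaledProj ξ := by
  rw [mul_scaledProj]
  simp only [scaledProj, sub_mulVec, smul_mulVec, one_mulVec, vecMulVec_mulVec]
  ext i j
  simp [vecMulVec_apply]

lemma scaledProj_transpose (ξ : ι → ℝ) : (scaledProj ξ)ᵀ = scaledProj ξ := by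
  simp [scaledProj, transpose_vecMulVec]

lemma trace_scaledProj (ξ : ι → ℝ) :
    (scaledProj ξ).trace = (Fintype.card ι - 1) * (ξ ⬝ᵥ ξ) := by
  simp [scaledProj]
  ring

lemma trace_mul_scaledProj (X : Matrix ι ι ℝ) (ξ : ι → ℝ) :
    (X * scaledProj ξ).trace = (ξ ⬝ᵥ ξ) * X.trace - ξ ⬝ᵥ X *ᵥ ξ := by
  simp [mul_scaledProj, dotProduct_comm]

lemma trace_mul_scaledProj_mul_self {X : Matrix ι ι ℝ} (hX : X.IsSymm) (ξ : ι → ℝ) :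
    (X * scaledProj ξ * (X * scaledProj ξ)).trace
      = (ξ ⬝ᵥ ξ) ^ 2 * (X * Xᵀ).trace - 2 * (ξ ⬝ᵥ ξ) * (X *ᵥ ξ ⬝ᵥ X *ᵥ ξ)
        + (ξ ⬝ᵥ X *ᵥ ξ) ^ 2 := by
  have hvec : ξ ᵥ* X = X *ᵥ ξ := by rw [← mulVec_transpose, hX.eq]
  have hXX : X *ᵥ X *ᵥ ξ ⬝ᵥ ξ = X *ᵥ ξ ⬝ᵥ X *ᵥ ξ := by
    rw [dotProduct_comm, dotProduct_mulVec, hvec]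
  rw [mul_scaledProj]
  simp only [sub_mul, mul_sub, smul_mul, Matrix.mul_smul, vecMulVec_mul, mul_vecMulVec,
    trace_sub, trace_smul, trace_vecMulVec, smul_eq_mul, hX.eq, smul_mulVec,
    vecMulVec_mulVec, smul_dotProduct, MulOpposite.smul_eq_mul_unop, MulOpposite.unop_op]
  rw [hXX, hvec, dotProduct_comm (X *ᵥ ξ) ξ]
  ring

end ScaledProj

noncomputable def realSecondVariationIntegrand (X : Matrix ι ι ℝ) (ξ : ι → ℝ) : ℝ :=
  -2 * (X *ᵥ ξ ⬝ᵥ X *ᵥ ξ) * (ξ ⬝ᵥ ξ) + (ξ ⬝ᵥ X *ᵥ ξ) ^ 2 / 2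
    + (ξ ⬝ᵥ X *ᵥ ξ) * X.trace * (ξ ⬝ᵥ ξ) - X.trace ^ 2 * (ξ ⬝ᵥ ξ) ^ 2 / 2
    + (X * Xᵀ).trace * (ξ ⬝ᵥ ξ) ^ 2

lemma sq_dotProduct_self_mul_realSecondVariationIntegrand [DecidableEq ι] {X : Matrix ι ι ℝ}
    (hX : X.IsSymm) (ξ : ι → ℝ) :
    (ξ ⬝ᵥ ξ) ^ 2 * realSecondVariationIntegrand X ξ
      = (scaledProj ξ * X * scaledProj ξ * (scaledProj ξ * X * scaledProj ξ)ᵀ).trace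
        - (scaledProj ξ * X * scaledProj ξ).trace ^ 2 / 2 := by
  rw [trace_mul_transpose_of_mul_self_eq_smul (scaledProj_mul_self ξ) (scaledProj_transpose ξ) hX,
    trace_mul_mul_of_mul_self_eq_smul (scaledProj_mul_self ξ), trace_mul_scaledProj_mul_self hX,
    trace_mul_scaledProj, realSecondVariationIntegrand]
  ring

lemma realSecondVariationIntegrand_nonneg (hι : Fintype.card ι ≤ 3) {X : Matrix ι ι ℝ}
    (hX : X.IsSymm) (ξ : ι → ℝ) : 0 ≤ realSecondVariationIntegrand X ξ := by
  classical
  rcases eq_or_ne ξ 0 with rfl | hξ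
  · simp [realSecondVariationIntegrand]
  have hn : 0 < ξ ⬝ᵥ ξ :=
    lt_of_le_of_ne (by simpa using dotProduct_star_self_nonneg ξ)
      (Ne.symm (dotProduct_self_eq_zero.not.mpr hξ))
  refine nonneg_of_mul_nonneg_right ?_ (pow_pos hn 2)
  rw [sq_dotProduct_self_mul_realSecondVariationIntegrand hX]
  have hcs := mul_sq_trace_le_of_mul_self_eq_smul (scaledProj_mul_self ξ)
    (scaledProj_transpose ξ) hn X
  rw [trace_scaledProj] at hcs
  set M := scaledProj ξ * X * scaledProj ξ
  have hd : ((Fintype.card ι : ℝ) - 1) * (ξ ⬝ᵥ ξ) ≤ 2 * (ξ ⬝ᵥ ξ) := by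
    have : (Fintype.card ι : ℝ) ≤ 3 := by exact_mod_cast hι
    nlinarith
  have h2 : (ξ ⬝ᵥ ξ) * M.trace ^ 2 ≤ (ξ ⬝ᵥ ξ) * (2 * (M * Mᵀ).trace) := by
    nlinarith [mul_le_mul_of_nonneg_right hd (trace_mul_transpose_self_nonneg M)]
  linarith [le_of_mul_le_mul_left h2 hn]

lemma secondVariationIntegrand_eq_ofReal (A : Matrix (Fin 3) (Fin 3) ℂ) (ξ : Fin 3 → ℝ) :
    secondVariationIntegrand A ξ = ↑(realSecondVariationIntegrand (A.map Complex.re) ξ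
      + realSecondVariationIntegrand (A.map Complex.im) ξ) := by
  simp only [secondVariationIntegrand, realSecondVariationIntegrand, Fin.sum_univ_three,
    dotProduct, mulVec, trace, Matrix.diag, mul_apply, transpose_apply, map_apply]
  apply Complex.ext <;>
  simp only [Complex.normSq_apply, Complex.add_re, Complex.add_im, Complex.sub_re, Complex.sub_im,
    Complex.mul_re, Complex.mul_im, Complex.neg_re, Complex.neg_im, Complex.ofReal_re,
    Complex.ofReal_im, Complex.conj_re, Complex.conj_im, Complex.re_ofNat, Complex.im_ofNat,
    Complex.inv_re, Complex.inv_im, map_add, pow_two, one_div] <;>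
  ring

theorem secondVariationIntegrand_nonneg (A : Matrix (Fin 3) (Fin 3) ℂ)
    (hA : A.IsSymm) (ξ : Fin 3 → ℝ) :
    0 ≤ (secondVariationIntegrand A ξ).re ∧ (secondVariationIntegrand A ξ).im = 0 := by
  rw [secondVariationIntegrand_eq_ofReal, Complex.ofReal_re, Complex.ofReal_im]
  refine ⟨add_nonneg ?_ ?_, rfl⟩ <;>
  exact realSecondVariationIntegrand_nonneg (by simp) (hA.map _) ξ
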